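/- arXiv:2112.08678 — 3 statements merged into one kernel-verified Lean document; each statement's English description precedes it below -/
import Mathlib

section
/- Let a, b be complex sequences of length N, let (c,d) be the standard Golay complementary mate of (a,b) (c_k = conj(b_{N−1−k}), d_k = −conj(a_{N−1−k})), let x1,x2,x3,x4 ∈ {+1,−1} with x1·x2 + x3·x4 = 0, and define p = x1·a ∥ x2·b ∥ x3·a ∥ x4·b and q = x1·c ∥ x2·d ∥ x3·c ∥ x4·d of length 4N. Then for every shift τ with N ≤ τ ≤ 2N−1, C_p(τ) + C_q(τ) = 0. -/
open Finset

/-- Aperiodic cross-correlation of length-`L` complex sequences at shift `0 ≤ τ`. -/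
noncomputable def aCorr (a b : ℕ → ℂ) (L τ : ℕ) : ℂ :=
  ∑ k ∈ Finset.range (L - τ), a k * (starRingEnd ℂ) (b (k + τ))

/-- Periodic cross-correlation of length-`L` complex sequences at shift `τ`. -/
noncomputable def pCorr (a b : ℕ → ℂ) (L τ : ℕ) : ℂ :=
  ∑ k ∈ Finset.range L, a k * (starRingEnd ℂ) (b ((k + τ) % L))

/-- The length-`4N` sequence `x1·a ∥ x2·b ∥ x3·a ∥ x4·b`. -/
noncomputable def quadConcat (N : ℕ) (x1 x2 x3 x4 : ℂ) (a b : ℕ → ℂ) : ℕ → ℂ :=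
  fun n =>
    if n < N then x1 * a n
    else if n < 2 * N then x2 * b (n - N)
    else if n < 3 * N then x3 * a (n - 2 * N)
    else x4 * b (n - 3 * N)

/-!
Split `C_p(N + t)`, `0 ≤ t ≤ N`, along the blocks of `p`: it is
`x1 x̄2 C_{a,b}(t) + x2 x̄3 C_{b,a}(t) + x3 x̄4 C_{a,b}(t)`
`+ x1 x̄3 conj C_a(N - t) + x2 x̄4 conj C_b(N - t)`.
Reversing and conjugating a pair of sequences swaps their cross-correlation, so the mate `(c, d)`
has `C_{c,d} = -C_{a,b}`, `C_{d,c} = -C_{b,a}`, `C_c = C_b`, `C_d = C_a`. Adding the expansions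
for `p` and `q`, everything cancels except `(x1 x3 + x2 x4)(conj C_a(N - t) + conj C_b(N - t))`,
and for signs `x1 x3 + x2 x4 = x2 x3 (x1 x2 + x3 x4) = 0`.
-/

open ComplexConjugate

section Correlation

variable (a b : ℕ → ℂ) (N t : ℕ)

noncomputable def conjReverse : ℕ → ℂ := fun k => conj (a (N - 1 - k))

lemma aCorr_neg_left : aCorr (-a) b N t = -aCorr a b N t := by
  simp [aCorr, ← sum_neg_distrib]

lemma aCorr_neg_right : aCorr a (-b) N t = -aCorr a b N t := by
  simp [aCorr, ← sum_neg_distrib]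

lemma aCorr_conjReverse :
    aCorr (conjReverse a N) (conjReverse b N) N t = aCorr b a N t := by
  rw [aCorr, aCorr, ← sum_range_reflect]
  refine sum_congr rfl fun k hk => ?_
  rw [mem_range] at hk
  simp only [conjReverse, Complex.conj_conj]
  rw [show N - 1 - (N - t - 1 - k + t) = k by omega, show N - 1 - (N - t - 1 - k) = k + t by omega,
    mul_comm]

end Correlation

section BlockOverlap

variable {u a b c : ℕ → ℂ} {x y z : ℂ} {N : ℕ}

lemma sum_mul_conj_shift_adjacent_blocks (t : ℕ) (hu : ∀ k < N, u k = x * a k)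
    (hv : ∀ k < N, u (N + k) = y * b k) :
    ∑ k ∈ range (N - t), u k * conj (u (k + (N + t))) = x * conj y * aCorr a b N t := by
  rw [aCorr, mul_sum]
  refine sum_congr rfl fun k hk => ?_
  rw [mem_range] at hk
  rw [hu k (by omega), show k + (N + t) = N + (k + t) by omega, hv _ (by omega), map_mul]
  ring

-- Shifted by `N + t`, a block meets the next block in its first `N - t` entries and the one
-- after that in its last `t` entries.
lemma sum_mul_conj_shift_three_blocks (hu : ∀ k < N, u k = x * a k)
    (hv : ∀ k < N, u (N + k) = y * b k) (hw : ∀ k < N, u (N + (N + k)) = z * c k) {t : ℕ}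
    (ht : t ≤ N) :
    ∑ k ∈ range N, u k * conj (u (k + (N + t)))
      = x * conj y * aCorr a b N t + x * conj z * conj (aCorr c a N (N - t)) := by
  have hstraddle : ∑ k ∈ range t, u (N - t + k) * conj (u (N - t + k + (N + t)))
      = x * conj z * conj (aCorr c a N (N - t)) := by
    rw [aCorr, show N - (N - t) = t by omega, map_sum, mul_sum]
    refine sum_congr rfl fun k hk => ?_
    rw [mem_range] at hk
    rw [hu _ (by omega), show N - t + k + (N + t) = N + (N + k) by omega, hw k (by omega),
      map_mul, map_mul, Complex.conj_conj, add_comm (N - t) k]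
    ring
  rw [show N = N - t + t by omega, sum_range_add, Nat.sub_add_cancel ht, hstraddle,
    sum_mul_conj_shift_adjacent_blocks t hu hv]

end BlockOverlap

section QuadConcat

variable {N k : ℕ} {x1 x2 x3 x4 : ℂ} {a b : ℕ → ℂ}

lemma quadConcat_of_lt (h : k < N) : quadConcat N x1 x2 x3 x4 a b k = x1 * a k := by
  simp [quadConcat, h]

lemma quadConcat_N_add (h : k < N) : quadConcat N x1 x2 x3 x4 a b (N + k) = x2 * b k := by
  simp [quadConcat, show ¬N + k < N by omega, show N + k < 2 * N by omega]

lemma quadConcat_N_add_N_add (h : k < N) :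
    quadConcat N x1 x2 x3 x4 a b (N + (N + k)) = x3 * a k := by
  simp [quadConcat, show ¬N + (N + k) < N by omega, show ¬N + (N + k) < 2 * N by omega,
    show N + (N + k) < 3 * N by omega, show N + (N + k) - 2 * N = k by omega]

lemma quadConcat_N_add_N_add_N_add :
    quadConcat N x1 x2 x3 x4 a b (N + (N + (N + k))) = x4 * b k := by
  simp [quadConcat, show ¬N + (N + (N + k)) < N by omega,
    show ¬N + (N + (N + k)) < 2 * N by omega, show ¬N + (N + (N + k)) < 3 * N by omega,
    show N + (N + (N + k)) - 3 * N = k by omega]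

variable (N x1 x2 x3 x4 a b) {t : ℕ}

lemma aCorr_quadConcat_N_add (ht : t ≤ N) :
    aCorr (quadConcat N x1 x2 x3 x4 a b) (quadConcat N x1 x2 x3 x4 a b) (4 * N) (N + t)
      = x1 * conj x2 * aCorr a b N t + x2 * conj x3 * aCorr b a N t
        + x3 * conj x4 * aCorr a b N t + x1 * conj x3 * conj (aCorr a a N (N - t))
        + x2 * conj x4 * conj (aCorr b b N (N - t)) := by
  set p := quadConcat N x1 x2 x3 x4 a b
  have h₁ := sum_mul_conj_shift_three_blocks (u := p) (fun _ => quadConcat_of_lt)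
    (fun _ => quadConcat_N_add) (fun _ => quadConcat_N_add_N_add) ht
  have h₂ := sum_mul_conj_shift_three_blocks (u := fun k => p (N + k))
    (fun _ => quadConcat_N_add) (fun _ => quadConcat_N_add_N_add)
    (fun _ _ => quadConcat_N_add_N_add_N_add) ht
  have h₃ := sum_mul_conj_shift_adjacent_blocks (u := fun k => p (N + (N + k))) t
    (fun _ => quadConcat_N_add_N_add) (fun _ _ => quadConcat_N_add_N_add_N_add)
  rw [aCorr, show 4 * N - (N + t) = N + (N + (N - t)) by omega, sum_range_add, sum_range_add]
  simp only [add_assoc] at h₂ h₃ ⊢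
  rw [h₁, h₂, h₃]
  ring

end QuadConcat

lemma add_mul_add_mul_eq_zero_of_sq_eq_one {R : Type*} [CommRing R] {x1 x2 x3 x4 : R}
    (hx2 : x2 ^ 2 = 1) (hx3 : x3 ^ 2 = 1) (h : x1 * x2 + x3 * x4 = 0) :
    x1 * x3 + x2 * x4 = 0 := by
  linear_combination x2 * x3 * h - x1 * x3 * hx2 - x2 * x4 * hx3

lemma Complex.conj_eq_self_of_eq_one_or_eq_neg_one {x : ℂ} (hx : x = 1 ∨ x = -1) :
    conj x = x := by
  rcases hx with rfl | rfl <;> simp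

theorem statement4_general (N : ℕ) (a b c d : ℕ → ℂ) (x1 x2 x3 x4 : ℂ)
    (hx2 : x2 = 1 ∨ x2 = -1)
    (hx3 : x3 = 1 ∨ x3 = -1) (hx4 : x4 = 1 ∨ x4 = -1)
    (hsum : x1 * x2 + x3 * x4 = 0)
    (hc : ∀ k, c k = (starRingEnd ℂ) (b (N - 1 - k)))
    (hd : ∀ k, d k = -(starRingEnd ℂ) (a (N - 1 - k)))
    (p q : ℕ → ℂ)
    (hp : p = quadConcat N x1 x2 x3 x4 a b)
    (hq : q = quadConcat N x1 x2 x3 x4 c d) :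
    ∀ τ, N ≤ τ → τ ≤ 2 * N - 1 →
      aCorr p p (4 * N) τ + aCorr q q (4 * N) τ = 0 := by
  intro τ hτN hτ2N
  obtain ⟨t, ht, rfl⟩ : ∃ t ≤ N, τ = N + t := ⟨τ - N, by omega, by omega⟩
  have hc : c = conjReverse b N := funext hc
  have hd : d = -conjReverse a N := funext hd
  have hkey := add_mul_add_mul_eq_zero_of_sq_eq_one (sq_eq_one_iff.mpr hx2)
    (sq_eq_one_iff.mpr hx3) hsum
  subst hp hq hc hd
  rw [aCorr_quadConcat_N_add _ _ _ _ _ _ _ ht, aCorr_quadConcat_N_add _ _ _ _ _ _ _ ht]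
  simp only [aCorr_neg_left, aCorr_neg_right, neg_neg, aCorr_conjReverse,
    Complex.conj_eq_self_of_eq_one_or_eq_neg_one hx2,
    Complex.conj_eq_self_of_eq_one_or_eq_neg_one hx3,
    Complex.conj_eq_self_of_eq_one_or_eq_neg_one hx4]
  linear_combination (conj (aCorr a a N (N - t)) + conj (aCorr b b N (N - t))) * hkey

theorem statement4 (N : ℕ) (a b c d : ℕ → ℂ) (x1 x2 x3 x4 : ℂ)
    (hx1 : x1 = 1 ∨ x1 = -1) (hx2 : x2 = 1 ∨ x2 = -1)
    (hx3 : x3 = 1 ∨ x3 = -1) (hx4 : x4 = 1 ∨ x4 = -1)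
    (hsum : x1 * x2 + x3 * x4 = 0)
    (hc : ∀ k, c k = (starRingEnd ℂ) (b (N - 1 - k)))
    (hd : ∀ k, d k = -(starRingEnd ℂ) (a (N - 1 - k)))
    (p q : ℕ → ℂ)
    (hp : p = quadConcat N x1 x2 x3 x4 a b)
    (hq : q = quadConcat N x1 x2 x3 x4 c d) :
    ∀ τ, N ≤ τ → τ ≤ 2 * N - 1 →
      aCorr p p (4 * N) τ + aCorr q q (4 * N) τ = 0 :=
  statement4_general N a b c d x1 x2 x3 x4 hx2 hx3 hx4 hsum hc hd p q hp hq
end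

section
/- Let a, b, c, d be complex sequences of length N, let x1,x2,x3,x4 ∈ {+1,−1} with x1·x2 + x3·x4 = 0, and define the length-4N sequences p = x1·a ∥ x2·b ∥ x3·a ∥ x4·b and q = x1·c ∥ x2·d ∥ x3·c ∥ x4·d. Then for every shift 0 ≤ τ ≤ N, the periodic cross-correlation satisfies R_{p,q}(τ) = 2·(C_{a,c}(τ) + C_{b,d}(τ)), where C_{a,c}(N) and C_{b,d}(N) are interpreted as 0. In particular, if C_{a,c}(τ) + C_{b,d}(τ) = 0 for all 0 ≤ τ ≤ N−1 (i.e., (c,d) is a Golay complementary mate of (a,b)), then R_{p,q}(τ) = 0 for all 0 ≤ τ ≤ N. -/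
open Finset

/-! For a shift `τ ≤ N`, the periodic correlation of a concatenation of length-`N` blocks splits
block by block: the first `N - τ` entries of a block of `p` meet the same block of `q`, giving the
aperiodic correlation at `τ`, and the last `τ` entries meet the start of the cyclically next block,
giving the conjugate of an aperiodic correlation at `N - τ`. For `p = x1·a ∥ x2·b ∥ x3·a ∥ x4·b`
the in-block terms add up to `2 (C_{a,c}(τ) + C_{b,d}(τ))`, while the wrap-around terms carry the
coefficients `x1 x2 + x3 x4` and `x2 x3 + x4 x1`, which both vanish for signs. -/

open ComplexConjugate

lemma aCorr_const_mul_const_mul (x y : ℂ) (u v : ℕ → ℂ) (L τ : ℕ) :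
    aCorr (fun k => x * u k) (fun k => y * v k) L τ = x * conj y * aCorr u v L τ := by
  simp only [aCorr, mul_sum, map_mul]
  exact sum_congr rfl fun _ _ => by ring

lemma aCorr_length (u v : ℕ → ℂ) (L : ℕ) : aCorr u v L L = 0 := by
  simp [aCorr]

lemma sum_range_mul {β : Type*} [AddCommMonoid β] (M N : ℕ) (f : ℕ → β) :
    ∑ k ∈ range (M * N), f k = ∑ j ∈ range M, ∑ i ∈ range N, f (j * N + i) := by
  induction M with
  | zero => simp
  | succ M ih => rw [Nat.succ_mul, sum_range_add, ih, sum_range_succ]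

lemma mul_add_mod_mul {N m : ℕ} (a M : ℕ) (hm : m < N) :
    (a * N + m) % (M * N) = a % M * N + m := by
  have hdiv : (a * N + m) / N = a := by
    rw [add_comm, Nat.add_mul_div_right _ _ (by omega), Nat.div_eq_of_lt hm, zero_add]
  rw [mul_comm M, Nat.mod_mul, Nat.mul_add_mod_of_lt hm, hdiv]
  ring

lemma sum_block_pCorr {M N τ j : ℕ} (hτ : τ ≤ N) (hj : j < M) {u v : ℕ → ℕ → ℂ} {p q : ℕ → ℂ}
    (hp : ∀ j < M, ∀ i < N, p (j * N + i) = u j i)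
    (hq : ∀ j < M, ∀ i < N, q (j * N + i) = v j i) :
    ∑ i ∈ range N, p (j * N + i) * conj (q ((j * N + i + τ) % (M * N))) =
      aCorr (u j) (v j) N τ + conj (aCorr (v ((j + 1) % M)) (u j) N (N - τ)) := by
  have hsplit := sum_range_add (fun i => p (j * N + i) * conj (q ((j * N + i + τ) % (M * N))))
    (N - τ) τ
  rw [Nat.sub_add_cancel hτ] at hsplit
  rw [hsplit]
  congr 1
  · have hblock : j * N + N ≤ M * N := by simpa [add_mul] using Nat.mul_le_mul_right N hj
    refine sum_congr rfl fun i hi => ?_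
    rw [mem_range] at hi
    rw [add_assoc, Nat.mod_eq_of_lt (by omega), hp j hj i (by omega), hq j hj _ (by omega)]
  · rw [aCorr, Nat.sub_sub_self hτ, map_sum]
    refine sum_congr rfl fun m hm => ?_
    rw [mem_range] at hm
    have hwrap : j * N + (N - τ + m) + τ = (j + 1) * N + m := by rw [add_mul]; omega
    rw [hwrap, mul_add_mod_mul _ _ (by omega), hp j hj _ (by omega),
      hq _ (Nat.mod_lt _ (by omega)) m (by omega), map_mul, Complex.conj_conj, mul_comm,
      add_comm m]

theorem pCorr_eq_sum_blocks {M N τ : ℕ} (hτ : τ ≤ N) {u v : ℕ → ℕ → ℂ} {p q : ℕ → ℂ}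
    (hp : ∀ j < M, ∀ i < N, p (j * N + i) = u j i)
    (hq : ∀ j < M, ∀ i < N, q (j * N + i) = v j i) :
    pCorr p q (M * N) τ = ∑ j ∈ range M,
      (aCorr (u j) (v j) N τ + conj (aCorr (v ((j + 1) % M)) (u j) N (N - τ))) := by
  rw [pCorr, sum_range_mul]
  exact sum_congr rfl fun j hj => sum_block_pCorr hτ (mem_range.1 hj) hp hq

def quadBlocks (x1 x2 x3 x4 : ℂ) (a b : ℕ → ℂ) : ℕ → ℕ → ℂ
  | 0 => fun i => x1 * a i
  | 1 => fun i => x2 * b i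
  | 2 => fun i => x3 * a i
  | _ => fun i => x4 * b i

lemma quadConcat_mul_add {N j i : ℕ} (x1 x2 x3 x4 : ℂ) (a b : ℕ → ℂ) (hj : j < 4)
    (hi : i < N) :
    quadConcat N x1 x2 x3 x4 a b (j * N + i) = quadBlocks x1 x2 x3 x4 a b j i := by
  interval_cases j <;> simp only [quadConcat, quadBlocks] <;> split_ifs <;>
    first | omega | congr 2; omega

theorem pCorr_quadConcat {N τ : ℕ} (hτ : τ ≤ N) (x1 x2 x3 x4 : ℂ) (a b c d : ℕ → ℂ) :
    pCorr (quadConcat N x1 x2 x3 x4 a b) (quadConcat N x1 x2 x3 x4 c d) (4 * N) τ =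
      (x1 * conj x1 + x3 * conj x3) * aCorr a c N τ +
      (x2 * conj x2 + x4 * conj x4) * aCorr b d N τ +
      (conj x2 * x1 + conj x4 * x3) * conj (aCorr d a N (N - τ)) +
      (conj x3 * x2 + conj x1 * x4) * conj (aCorr c b N (N - τ)) := by
  rw [pCorr_eq_sum_blocks hτ (fun j hj i hi => quadConcat_mul_add x1 x2 x3 x4 a b hj hi)
    (fun j hj i hi => quadConcat_mul_add x1 x2 x3 x4 c d hj hi)]
  simp only [sum_range_succ, sum_range_zero, Nat.reduceAdd, Nat.reduceMod, quadBlocks,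
    aCorr_const_mul_const_mul, map_mul, Complex.conj_conj]
  ring

theorem statement8 (N : ℕ) (a b c d : ℕ → ℂ) (x1 x2 x3 x4 : ℂ)
    (hx1 : x1 = 1 ∨ x1 = -1) (hx2 : x2 = 1 ∨ x2 = -1)
    (hx3 : x3 = 1 ∨ x3 = -1) (hx4 : x4 = 1 ∨ x4 = -1)
    (hsum : x1 * x2 + x3 * x4 = 0)
    (p q : ℕ → ℂ)
    (hp : p = quadConcat N x1 x2 x3 x4 a b)
    (hq : q = quadConcat N x1 x2 x3 x4 c d) :
    ∀ τ, τ ≤ N →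
      pCorr p q (4 * N) τ = 2 * (aCorr a c N τ + aCorr b d N τ) ∧
      ((∀ t, t ≤ N - 1 → aCorr a c N t + aCorr b d N t = 0) →
        pCorr p q (4 * N) τ = 0) := by
  intro τ hτ
  have hreal {x : ℂ} (hx : x = 1 ∨ x = -1) : conj x = x := by rcases hx with rfl | rfl <;> simp
  have hsq {x : ℂ} (hx : x = 1 ∨ x = -1) : x * x = 1 := mul_self_eq_one_iff.2 hx
  have hsum' : x3 * x2 + x1 * x4 = 0 := by
    linear_combination x2 * x4 * hsum - x1 * x4 * hsq hx2 - x2 * x3 * hsq hx4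
  have hmain : pCorr p q (4 * N) τ = 2 * (aCorr a c N τ + aCorr b d N τ) := by
    rw [hp, hq, pCorr_quadConcat hτ, hreal hx1, hreal hx2, hreal hx3, hreal hx4]
    linear_combination aCorr a c N τ * (hsq hx1 + hsq hx3) + aCorr b d N τ * (hsq hx2 + hsq hx4) +
      conj (aCorr d a N (N - τ)) * hsum + conj (aCorr c b N (N - τ)) * hsum'
  refine ⟨hmain, fun hmate => ?_⟩
  rcases hτ.lt_or_eq with hlt | rfl
  · rw [hmain, hmate τ (by omega), mul_zero]
  · rw [hmain, aCorr_length, aCorr_length, add_zero, mul_zero]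
end

section
/- Let 𝔠 = {C^0,…,C^{M−1}} be an (M,M,N)-complete complementary code with sequences c^k_m of length N, let ω = exp(2πi/M) and f_{i,j} = ω^{i·j}, and for 0 ≤ k ≤ M−1 let B̃_k be the length-M²N sequence whose entry at position i·MN + j·N + n equals f_{i,j} · c^j_{k,n}. Then the set {B̃_0,…,B̃_{M−1}} is a complementary set: Σ_{k=0}^{M−1} C_{B̃_k}(τ) = M³N if τ = 0, and = 0 for all 1 ≤ τ ≤ M²N−1. -/
/-!
Cut each `B̃ k` into `M²` blocks of length `N`; block `i = a·M + j` is `ω^(a·j) • c j k`. A shift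
`τ = t·N + s` pairs each block with the blocks `t` and `t + 1` further on, so after summing over
`k` the CCC property kills every pairing except block `i` with block `i + t` at `s = 0` and
`i ≡ i + t (mod M)`. For `τ = 0` every block contributes `M·N`, giving `M³N`. Otherwise
`t = p·M` with `0 < p < M`, the phases collapse to `ω^(-p·i)`, and these sum to zero over the
`M(M - p)` surviving blocks because `ω^(-p)` is an `M`-th root of unity different from `1`.
-/

open Finset

/-- For an `(M,M,N)`-CCC with sequences `c k m` (set `k`, member `m`), the length-`M²N`
sequence `B̃ k` whose entry at position `i·MN + j·N + n` is `ω^(i·j) · c j k n`,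
where `ω = exp(2πi/M)`. -/
noncomputable def Bseq (M N : ℕ) (c : ℕ → ℕ → ℕ → ℂ) (k : ℕ) : ℕ → ℂ :=
  fun n =>
    Complex.exp (2 * Real.pi * Complex.I * ((n / (M * N) : ℕ) : ℂ) *
        (((n % (M * N)) / N : ℕ) : ℂ) / (M : ℂ)) *
      c ((n % (M * N)) / N) k (n % N)

open ComplexConjugate

lemma aCorr_congr {a a' b b' : ℕ → ℂ} {L : ℕ} (τ : ℕ) (ha : ∀ n < L, a n = a' n)
    (hb : ∀ n < L, b n = b' n) : aCorr a b L τ = aCorr a' b' L τ := by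
  refine sum_congr rfl fun n hn => ?_
  have := mem_range.1 hn
  rw [ha n (by omega), hb (n + τ) (by omega)]

lemma aCorr_const_mul (x y : ℂ) (a b : ℕ → ℂ) (L τ : ℕ) :
    aCorr (fun n => x * a n) (fun n => y * b n) L τ = x * conj y * aCorr a b L τ := by
  simp only [aCorr, mul_sum, map_mul]
  exact sum_congr rfl fun _ _ => by ring

lemma aCorr_of_le {a b : ℕ → ℂ} {L τ : ℕ} (h : L ≤ τ) : aCorr a b L τ = 0 := by
  simp [aCorr, Nat.sub_eq_zero_of_le h]

lemma sum_range_succ_mul_sub {β : Type*} [AddCommMonoid β] (f : ℕ → β) {N s : ℕ} (hs : s ≤ N)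
    (K : ℕ) :
    ∑ n ∈ range ((K + 1) * N - s), f n =
      ∑ i ∈ range (K + 1), ∑ r ∈ range (N - s), f (i * N + r) +
        ∑ i ∈ range K, ∑ u ∈ range s, f (i * N + (N - s) + u) := by
  induction K with
  | zero => simp
  | succ K ih =>
    have hK := add_one_mul (K + 1) N
    have hK' := add_one_mul K N
    have hlast : ∑ u ∈ range N, f ((K + 1) * N - s + u) =
        ∑ u ∈ range s, f (K * N + (N - s) + u) + ∑ r ∈ range (N - s), f ((K + 1) * N + r) := by
      have e := sum_range_add (fun u => f ((K + 1) * N - s + u)) s (N - s)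
      rw [Nat.add_sub_cancel' hs] at e
      rw [e]
      congr 1 <;> refine sum_congr rfl fun u hu => congrArg f ?_ <;> omega
    rw [show (K + 1 + 1) * N - s = ((K + 1) * N - s) + N by omega, sum_range_add, ih, hlast,
      sum_range_succ _ (K + 1), sum_range_succ (fun i => ∑ u ∈ range s, f (i * N + (N - s) + u)) K]
    abel

theorem aCorr_eq_sum_blocks (a b : ℕ → ℂ) {B N t s : ℕ} (ht : t < B) (hs : s ≤ N) :
    aCorr a b (B * N) (t * N + s) =
      ∑ i ∈ range (B - t), aCorr (fun r => a (i * N + r)) (fun r => b ((i + t) * N + r)) N s +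
        ∑ i ∈ range (B - t - 1),
          conj (aCorr (fun r => b ((i + t + 1) * N + r)) (fun r => a (i * N + r)) N (N - s)) := by
  obtain ⟨K, rfl⟩ : ∃ K, B = t + (K + 1) := ⟨B - t - 1, by omega⟩
  have hlen : (t + (K + 1)) * N - (t * N + s) = (K + 1) * N - s := by
    rw [add_mul]; omega
  simp only [aCorr, hlen, Nat.add_sub_cancel_left, Nat.add_sub_cancel, Nat.sub_sub_self hs,
    map_sum, map_mul, Complex.conj_conj]
  rw [sum_range_succ_mul_sub _ hs]
  congr 1
  · refine sum_congr rfl fun i _ => sum_congr rfl fun r _ => ?_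
    ring_nf
  · refine sum_congr rfl fun i _ => sum_congr rfl fun u _ => ?_
    have := add_one_mul (i + t) N
    rw [add_mul i t] at this
    rw [mul_comm, show i * N + (N - s) + u + (t * N + s) = (i + t + 1) * N + u by omega,
      show i * N + (u + (N - s)) = i * N + (N - s) + u by ring]

noncomputable def ω (M : ℕ) : ℂ := Complex.exp (2 * Real.pi * Complex.I / M)

lemma conj_ω (M : ℕ) : conj (ω M) = (ω M)⁻¹ := by
  rw [ω, ← Complex.exp_conj, ← Complex.exp_neg]
  congr 1
  simp only [map_div₀, map_mul, Complex.conj_I, Complex.conj_ofReal, Complex.conj_natCast,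
    map_ofNat]
  ring

lemma conj_ω_pow (M n : ℕ) : conj (ω M ^ n) = (ω M ^ n)⁻¹ := by
  rw [map_pow, conj_ω, inv_pow]

lemma ω_ne_zero (M : ℕ) : ω M ≠ 0 := Complex.exp_ne_zero _

lemma Bseq_mul_add {M N : ℕ} (c : ℕ → ℕ → ℕ → ℂ) (k i : ℕ) {r : ℕ} (hr : r < N) :
    Bseq M N c k (i * N + r) = ω M ^ (i / M * (i % M)) * c (i % M) k r := by
  have hdiv : (i * N + r) / N = i := by
    rw [add_comm, Nat.add_mul_div_right _ _ (by omega), Nat.div_eq_of_lt hr, zero_add]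
  have hmod : (i * N + r) % N = r := by
    rw [add_comm, Nat.add_mul_mod_self_right, Nat.mod_eq_of_lt hr]
  rw [Bseq, mul_comm M N, ← Nat.div_div_eq_div_mul, Nat.mod_mul_right_div_self, hdiv, hmod, ω,
    ← Complex.exp_nat_mul]
  congr 2
  push_cast
  ring

lemma sum_aCorr_Bseq_blocks (M N : ℕ) (c : ℕ → ℕ → ℕ → ℂ) (i j s : ℕ) :
    ∑ k ∈ range M,
        aCorr (fun r => Bseq M N c k (i * N + r)) (fun r => Bseq M N c k (j * N + r)) N s =
      ω M ^ (i / M * (i % M)) * conj (ω M ^ (j / M * (j % M))) *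
        ∑ k ∈ range M, aCorr (c (i % M) k) (c (j % M) k) N s := by
  rw [mul_sum]
  refine sum_congr rfl fun k _ => ?_
  rw [aCorr_congr s (fun r hr => Bseq_mul_add c k i hr) (fun r hr => Bseq_mul_add c k j hr),
    aCorr_const_mul]

def IsCompleteComplementaryCode (M N : ℕ) (c : ℕ → ℕ → ℕ → ℂ) : Prop :=
  ∀ k1 < M, ∀ k2 < M, ∀ τ < N,
    ∑ m ∈ Finset.range M, aCorr (c k1 m) (c k2 m) N τ =
      if k1 = k2 ∧ τ = 0 then (M * N : ℂ) else 0

lemma sum_aCorr_Bseq {M N : ℕ} {c : ℕ → ℕ → ℕ → ℂ} (hM : 0 < M)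
    (hc : IsCompleteComplementaryCode M N c) {t s : ℕ} (ht : t < M ^ 2) (hs : s < N) :
    ∑ k ∈ range M, aCorr (Bseq M N c k) (Bseq M N c k) (M ^ 2 * N) (t * N + s) =
      ∑ i ∈ range (M ^ 2 - t), if i % M = (i + t) % M ∧ s = 0 then
        ω M ^ (i / M * (i % M)) * conj (ω M ^ ((i + t) / M * ((i + t) % M))) * (M * N) else 0 := by
  have hcorr (i j : ℕ) := hc (i % M) (Nat.mod_lt i hM) (j % M) (Nat.mod_lt j hM)
  have htail (i : ℕ) :
      ∑ k ∈ range M, aCorr (c ((i + t + 1) % M) k) (c (i % M) k) N (N - s) = 0 := by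
    rcases Nat.eq_zero_or_pos s with rfl | hs0
    · exact sum_eq_zero fun k _ => aCorr_of_le (by omega)
    · rw [hcorr _ _ _ (by omega), if_neg (by omega)]
  simp_rw [aCorr_eq_sum_blocks _ _ ht hs.le]
  rw [sum_add_distrib, sum_comm, sum_comm (s := range M)]
  simp_rw [← map_sum, sum_aCorr_Bseq_blocks, htail, hcorr _ _ _ hs, mul_ite, mul_zero]
  simp only [sum_const_zero, map_zero, add_zero]

lemma sum_aCorr_Bseq_zero {M N : ℕ} {c : ℕ → ℕ → ℕ → ℂ} (hM : 0 < M) (hN : 0 < N)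
    (hc : IsCompleteComplementaryCode M N c) :
    ∑ k ∈ range M, aCorr (Bseq M N c k) (Bseq M N c k) (M ^ 2 * N) 0 = M ^ 3 * N := by
  have h := sum_aCorr_Bseq hM hc (t := 0) (by positivity) hN
  rw [zero_mul, add_zero] at h
  simp_rw [h, add_zero, Nat.sub_zero, and_self, if_true, conj_ω_pow,
    mul_inv_cancel₀ (pow_ne_zero _ (ω_ne_zero M)), one_mul, sum_const, card_range, nsmul_eq_mul]
  push_cast
  ring

lemma ω_pow_mul_conj_ω_pow_add (M a b p : ℕ) :
    ω M ^ (a * b) * conj (ω M ^ ((a + p) * b)) = ((ω M)⁻¹ ^ p) ^ b := by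
  rw [conj_ω_pow, add_mul, pow_add, mul_inv, ← mul_assoc,
    mul_inv_cancel₀ (pow_ne_zero _ (ω_ne_zero M)), one_mul, pow_mul, inv_pow, inv_pow]

lemma sum_aCorr_Bseq_of_pos {M N : ℕ} {c : ℕ → ℕ → ℕ → ℂ} (hM : 0 < M) (hN : 0 < N)
    (hc : IsCompleteComplementaryCode M N c) {τ : ℕ} (hτ0 : 0 < τ) (hτ : τ < M ^ 2 * N) :
    ∑ k ∈ range M, aCorr (Bseq M N c k) (Bseq M N c k) (M ^ 2 * N) τ = 0 := by
  rw [← Nat.div_add_mod' τ N,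
    sum_aCorr_Bseq hM hc ((Nat.div_lt_iff_lt_mul hN).2 hτ) (Nat.mod_lt τ hN)]
  by_cases h : τ % N = 0 ∧ M ∣ τ / N
  swap
  · refine sum_eq_zero fun i _ => if_neg fun ⟨hi, hs⟩ => h ⟨hs, ?_⟩
    have : 0 ≡ τ / N [MOD M] := Nat.ModEq.add_left_cancel' i (by rw [add_zero]; exact hi)
    exact Nat.modEq_zero_iff_dvd.1 this.symm
  obtain ⟨hs, p, hp⟩ := h
  have hp0 : p ≠ 0 := by
    rintro rfl
    have := Nat.div_add_mod' τ N
    rw [hp, mul_zero, zero_mul, hs] at this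
    omega
  have hpM : p < M := by
    have := (Nat.div_lt_iff_lt_mul hN).2 hτ
    rw [hp, sq] at this
    exact Nat.lt_of_mul_lt_mul_left this
  have hω : IsPrimitiveRoot (ω M)⁻¹ M := (Complex.isPrimitiveRoot_exp M hM.ne').inv
  set ζ := (ω M)⁻¹ ^ p with hζ
  have hζM : ζ ^ M = 1 := by rw [hζ, pow_right_comm, hω.pow_eq_one, one_pow]
  have hterm (i : ℕ) : (if i % M = (i + τ / N) % M ∧ τ % N = 0 then
      ω M ^ (i / M * (i % M)) * conj (ω M ^ ((i + τ / N) / M * ((i + τ / N) % M))) * (M * N)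
      else 0) = ζ ^ i * (M * N) := by
    rw [hp, Nat.add_mul_mod_self_left, Nat.add_mul_div_left _ _ hM, if_pos ⟨rfl, hs⟩,
      ω_pow_mul_conj_ω_pow_add, ← pow_eq_pow_mod i hζM]
  rw [sum_congr rfl fun i _ => hterm i, ← sum_mul,
    geom_sum_eq (hω.pow_ne_one_of_pos_of_lt hp0 hpM : ζ ≠ 1),
    show M ^ 2 - τ / N = M * (M - p) by rw [hp, sq, Nat.mul_sub], pow_mul, hζM, one_pow,
    sub_self, zero_div, zero_mul]

theorem statement11 (M N : ℕ) (hM : 0 < M) (hN : 0 < N)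
    (c : ℕ → ℕ → ℕ → ℂ)
    (hCCC : ∀ k1 < M, ∀ k2 < M, ∀ τ < N,
      ∑ m ∈ Finset.range M, aCorr (c k1 m) (c k2 m) N τ =
        if k1 = k2 ∧ τ = 0 then (M * N : ℂ) else 0) :
    (∑ k ∈ Finset.range M,
        aCorr (Bseq M N c k) (Bseq M N c k) (M ^ 2 * N) 0 = (M ^ 3 * N : ℂ)) ∧
    (∀ τ, 1 ≤ τ → τ ≤ M ^ 2 * N - 1 →
      ∑ k ∈ Finset.range M,
        aCorr (Bseq M N c k) (Bseq M N c k) (M ^ 2 * N) τ = 0) := by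
  have hlen : 0 < M ^ 2 * N := by positivity
  exact ⟨sum_aCorr_Bseq_zero hM hN hCCC,
    fun τ hτ₁ hτ₂ => sum_aCorr_Bseq_of_pos hM hN hCCC hτ₁ (by omega)⟩
end
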